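/- arXiv:math/9806123 — 3 statements merged into one kernel-verified Lean document; each statement's English description precedes it below -/
import Mathlib

section
/- Let P_K = ⊕_{r=1}^l ℤ ϖ_r ⊂ ℤ^n, where ϖ_r is the weight with (ϖ_r)_i = 1 for 1 ≤ i ≤ r, (ϖ_r)_i = -1 for n-r+1 ≤ i ≤ n, and 0 otherwise. The bijection λ ↦ λ^♮ = (λ_1, …, λ_l) from P_K to ℤ^l preserves the dominance orders: μ ≤ λ in the dominance order of ℤ^n (with μ, λ ∈ P_K) if and only if ∑_{i=1}^j μ^♮_i ≤ ∑_{i=1}^j λ^♮_i for all 1 ≤ j ≤ l. -/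
open Finset

-- partial-sum lemmas for an "extended" sequence g : ℕ → ℤ
section aux
variable (n l : ℕ) (g : ℕ → ℤ)

lemma dom_mid (hz : ∀ i, l ≤ i → i < n - l → g i = 0)
    {j : ℕ} (hlj : l ≤ j) (hjn : j ≤ n - l) :
    ∑ i ∈ Finset.range j, g i = ∑ i ∈ Finset.range l, g i := by
  rw [Finset.range_eq_Ico, ← Finset.sum_Ico_consecutive g (Nat.zero_le l) hlj,
    ← Finset.range_eq_Ico]
  have : ∑ i ∈ Finset.Ico l j, g i = 0 := by
    apply Finset.sum_eq_zero
    intro i hi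
    rw [Finset.mem_Ico] at hi
    exact hz i hi.1 (by omega)
  omega

lemma dom_tail (hln : l ≤ n / 2)
    (hneg : ∀ i, i < l → g (n - 1 - i) = -g i)
    {j : ℕ} (hj : n - l ≤ j) (hjn : j ≤ n) :
    ∑ i ∈ Finset.Ico j n, g i = -∑ i ∈ Finset.range (n - j), g i := by
  rw [Finset.sum_Ico_eq_sum_range, ← Finset.sum_range_reflect, ← Finset.sum_neg_distrib]
  apply Finset.sum_congr rfl
  intro i hi
  rw [Finset.mem_range] at hi
  have h1 : j + (n - j - 1 - i) = n - 1 - i := by omega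
  rw [h1, hneg i (by omega)]

lemma dom_total (hln : l ≤ n / 2)
    (hz : ∀ i, l ≤ i → i < n - l → g i = 0)
    (hneg : ∀ i, i < l → g (n - 1 - i) = -g i) :
    ∑ i ∈ Finset.range n, g i = 0 := by
  rw [Finset.range_eq_Ico, ← Finset.sum_Ico_consecutive g (Nat.zero_le (n - l)) (by omega),
    ← Finset.range_eq_Ico, dom_tail n l g hln hneg le_rfl (by omega),
    dom_mid n l g hz (by omega) le_rfl]
  have : n - (n - l) = l := by omega
  rw [this]
  ring

lemma dom_refl (hln : l ≤ n / 2)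
    (hz : ∀ i, l ≤ i → i < n - l → g i = 0)
    (hneg : ∀ i, i < l → g (n - 1 - i) = -g i)
    {j : ℕ} (hj : n - l ≤ j) (hjn : j ≤ n) :
    ∑ i ∈ Finset.range j, g i = ∑ i ∈ Finset.range (n - j), g i := by
  have h1 : ∑ i ∈ Finset.range j, g i + ∑ i ∈ Finset.Ico j n, g i
      = ∑ i ∈ Finset.range n, g i := by
    rw [Finset.range_eq_Ico, Finset.range_eq_Ico]
    exact Finset.sum_Ico_consecutive g (Nat.zero_le j) hjn
  rw [dom_total n l g hln hz hneg, dom_tail n l g hln hneg hj hjn] at h1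
  omega

end aux

lemma dom_convert (n : ℕ) (f : Fin n → ℤ) {j : ℕ} (hj : j ≤ n) :
    ∑ i ∈ Finset.univ.filter (fun i : Fin n => (i : ℕ) < j), f i
      = ∑ i ∈ Finset.range j, (fun i => if h : i < n then f ⟨i, h⟩ else 0) i := by
  rw [Finset.sum_filter]
  calc ∑ a : Fin n, (if (a : ℕ) < j then f a else 0)
      = ∑ a : Fin n, (fun i : ℕ => if i < j then (if h : i < n then f ⟨i, h⟩ else 0) else 0)
          (a : ℕ) := by
        apply Finset.sum_congr rfl
        intro a _
        simp [a.isLt]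
    _ = ∑ i ∈ Finset.range n,
          (if i < j then (if h : i < n then f ⟨i, h⟩ else 0) else 0) :=
        Fin.sum_univ_eq_sum_range (fun i : ℕ => if i < j then (if h : i < n then f ⟨i, h⟩ else 0) else 0) n
    _ = ∑ i ∈ Finset.range j, (fun i => if h : i < n then f ⟨i, h⟩ else 0) i := by
        rw [← Finset.sum_subset (Finset.range_subset_range.2 hj)]
        · apply Finset.sum_congr rfl
          intro i hi
          rw [Finset.mem_range] at hi
          rw [if_pos hi]
        · intro i _ hi
          rw [Finset.mem_range] at hi
          rw [if_neg hi]

/-- The bijection `λ ↦ λ^♮ = (λ_1, …, λ_l)` from `P_K` to `ℤ^l` preserves the dominance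
orders: for `μ, λ ∈ P_K`, `μ ≤ λ` in the dominance order of `ℤ^n` iff the partial sums of
the first `l` coordinates satisfy `∑_{i=1}^j μ^♮_i ≤ ∑_{i=1}^j λ^♮_i` for all `1 ≤ j ≤ l`. -/
theorem natural_map_preserves_dominance (n l : ℕ) (hn : 2 ≤ n) (hl : 1 ≤ l)
    (hln : l ≤ n / 2) (mu lam : Fin n → ℤ)
    (hmu : (∀ i : Fin n, l ≤ (i : ℕ) → (i : ℕ) < n - l → mu i = 0) ∧
           (∀ i : Fin n, (i : ℕ) < l → mu ⟨n - 1 - (i : ℕ), by omega⟩ = -mu i))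
    (hlam : (∀ i : Fin n, l ≤ (i : ℕ) → (i : ℕ) < n - l → lam i = 0) ∧
            (∀ i : Fin n, (i : ℕ) < l → lam ⟨n - 1 - (i : ℕ), by omega⟩ = -lam i)) :
    ((∀ j : ℕ, 1 ≤ j → j ≤ n - 1 →
        ∑ i ∈ Finset.univ.filter (fun i : Fin n => (i : ℕ) < j), mu i ≤
        ∑ i ∈ Finset.univ.filter (fun i : Fin n => (i : ℕ) < j), lam i) ∧
      (∑ i, mu i) = ∑ i, lam i) ↔
    (∀ j : ℕ, 1 ≤ j → j ≤ l →
        ∑ i ∈ Finset.univ.filter (fun i : Fin n => (i : ℕ) < j), mu i ≤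
        ∑ i ∈ Finset.univ.filter (fun i : Fin n => (i : ℕ) < j), lam i) := by
  obtain ⟨hmu0, hmuneg⟩ := hmu
  obtain ⟨hlam0, hlamneg⟩ := hlam
  set gm : ℕ → ℤ := fun i => if h : i < n then mu ⟨i, h⟩ else 0 with hgm
  set gl : ℕ → ℤ := fun i => if h : i < n then lam ⟨i, h⟩ else 0 with hgl
  have hzm : ∀ i, l ≤ i → i < n - l → gm i = 0 := by
    intro i h1 h2
    simp only [hgm]
    rw [dif_pos (by omega : i < n)]
    exact hmu0 _ h1 h2
  have hzl : ∀ i, l ≤ i → i < n - l → gl i = 0 := by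
    intro i h1 h2
    simp only [hgl]
    rw [dif_pos (by omega : i < n)]
    exact hlam0 _ h1 h2
  have hnm : ∀ i, i < l → gm (n - 1 - i) = -gm i := by
    intro i hi
    simp only [hgm]
    rw [dif_pos (by omega : n - 1 - i < n), dif_pos (by omega : i < n)]
    exact hmuneg ⟨i, by omega⟩ hi
  have hnl : ∀ i, i < l → gl (n - 1 - i) = -gl i := by
    intro i hi
    simp only [hgl]
    rw [dif_pos (by omega : n - 1 - i < n), dif_pos (by omega : i < n)]
    exact hlamneg ⟨i, by omega⟩ hi
  constructor
  · intro h j h1 hj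
    exact h.1 j h1 (by omega)
  · intro h
    have hR : ∀ j, 1 ≤ j → j ≤ l →
        ∑ i ∈ Finset.range j, gm i ≤ ∑ i ∈ Finset.range j, gl i := by
      intro j h1 hj
      have := h j h1 hj
      rwa [dom_convert n mu (by omega), dom_convert n lam (by omega)] at this
    constructor
    · intro j h1 hj
      rw [dom_convert n mu (by omega), dom_convert n lam (by omega)]
      by_cases hjl : j ≤ l
      · exact hR j h1 hjl
      · by_cases hjm : j ≤ n - l
        · rw [dom_mid n l gm hzm (by omega) hjm, dom_mid n l gl hzl (by omega) hjm]
          exact hR l hl le_rfl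
        · rw [dom_refl n l gm hln hzm hnm (by omega) (by omega),
            dom_refl n l gl hln hzl hnl (by omega) (by omega)]
          exact hR (n - j) (by omega) (by omega)
    · have e1 : (∑ i, mu i) = ∑ i ∈ Finset.range n, gm i := by
        rw [show (∑ i, mu i) = ∑ i : Fin n, gm (i : ℕ) from
          Finset.sum_congr rfl (fun i _ => by simp only [hgm]; rw [dif_pos i.isLt])]
        exact Fin.sum_univ_eq_sum_range gm n
      have e2 : (∑ i, lam i) = ∑ i ∈ Finset.range n, gl i := by
        rw [show (∑ i, lam i) = ∑ i : Fin n, gl (i : ℕ) from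
          Finset.sum_congr rfl (fun i _ => by simp only [hgl]; rw [dif_pos i.isLt])]
        exact Fin.sum_univ_eq_sum_range gl n
      rw [e1, e2, dom_total n l gm hln hzm hnm, dom_total n l gl hln hzl hnl]
end

section
/- Let 0 < q < 1 and n ≥ 2, l ≤ ⌊n/2⌋. The matrix J^σ = ∑_{k≤l}(1-q^{2σ})e_{kk} + ∑_{l<k<n+1-l} e_{kk} - q^σ ∑_{k≤l}(e_{k,k'} + e_{k',k}) (with k' = n+1-k) is symmetric, and has exactly two eigenvalues: 1 with multiplicity n-l, and -q^{2σ} with multiplicity l. -/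
/-!
Write `c = q^σ`, so that `q^{2σ} = c²`, and let `T` be the permutation matrix of `k ↦ k'`.
Then `J^σ = diag(d) + diag(b) T`, and matrices of this shape multiply by an explicit rule,
because `T diag(a) = diag(a ∘ rev) T` and `T² = 1`. On each pair `{k, k'}` with `k ≤ l` the
matrix `J^σ` acts as `[[1 - c², -c], [-c, 0]]`, with eigenvectors `e_k - c e_{k'}` (eigenvalue `1`)
and `c e_k + e_{k'}` (eigenvalue `-c²`); in the middle it is the identity. The matrix `P` of
these eigenvectors has the same shape, satisfies `J^σ P = P D` with `D` diagonal, and is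
invertible because `P P̃ = diag(1 + c², …)` for the matrix `P̃` obtained by negating `c`.
Hence `J^σ` and `D` have the same characteristic polynomial.
-/

open Polynomial Matrix Equiv

namespace Matrix

variable {ι R : Type*} [Fintype ι] [DecidableEq ι] [CommRing R]

lemma permMatrix_mul_diagonal (σ : Perm ι) (a : ι → R) :
    σ.permMatrix R * diagonal a = diagonal (a ∘ σ) * σ.permMatrix R := by
  rw [PEquiv.toMatrix_toPEquiv_mul, PEquiv.mul_toMatrix_toPEquiv]
  ext i j
  simp [diagonal_apply, Equiv.eq_symm_apply, eq_comm]

lemma charpoly_eq_of_mul_eq_mul {A B P : Matrix ι ι R} (hP : IsUnit P) (h : A * P = P * B) :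
    A.charpoly = B.charpoly := by
  obtain ⟨U, rfl⟩ := hP
  have hU : (U : Matrix ι ι R) * (U : Matrix ι ι R)⁻¹ = 1 :=
    mul_nonsing_inv _ ((isUnit_iff_isUnit_det _).mp U.isUnit)
  rw [← charpoly_units_conj U B, ← h, mul_assoc, hU, mul_one]

def diagonalAddPerm (σ : Perm ι) (a b : ι → R) : Matrix ι ι R :=
  diagonal a + diagonal b * σ.permMatrix R

lemma diagonalAddPerm_apply (σ : Perm ι) (a b : ι → R) (i j : ι) :
    diagonalAddPerm σ a b i j = (if i = j then a i else 0) + (if σ i = j then b i else 0) := by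
  simp [diagonalAddPerm, diagonal_apply, PEquiv.mul_toMatrix_toPEquiv, Equiv.eq_symm_apply,
    eq_comm]

lemma diagonalAddPerm_zero (σ : Perm ι) (a : ι → R) :
    diagonalAddPerm σ a 0 = diagonal a := by
  simp [diagonalAddPerm]

lemma diagonalAddPerm_mul {σ : Perm ι} (hσ : Function.Involutive σ) (a b a' b' : ι → R) :
    diagonalAddPerm σ a b * diagonalAddPerm σ a' b' =
      diagonalAddPerm σ (a * a' + b * (b' ∘ σ)) (a * b' + b * (a' ∘ σ)) := by
  set P := σ.permMatrix R
  have hPP : P * P = 1 := by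
    rw [← permMatrix_mul, show σ * σ = 1 from Equiv.ext hσ, permMatrix_one]
  have hPd (d : ι → R) : P * diagonal d = diagonal (d ∘ σ) * P := permMatrix_mul_diagonal σ d
  calc (diagonal a + diagonal b * P) * (diagonal a' + diagonal b' * P)
      = diagonal a * diagonal a' + diagonal b * (P * diagonal b') * P
        + (diagonal a * diagonal b' * P + diagonal b * (P * diagonal a')) := by
        simp only [add_mul, mul_add, mul_assoc]; abel
    _ = diagonal (a * a' + b * (b' ∘ σ)) + diagonal (a * b' + b * (a' ∘ σ)) * P := by
        simp only [hPd, ← mul_assoc, diagonal_mul_diagonal]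
        rw [mul_assoc _ P P, hPP, mul_one, ← add_mul, diagonal_add, diagonal_add]
        rfl

lemma isUnit_diagonalAddPerm_one {σ : Perm ι} (hσ : Function.Involutive σ) {p : ι → R}
    (hp : ∀ i, IsUnit (1 - p i * p (σ i))) : IsUnit (diagonalAddPerm σ 1 p) := by
  have hinv : diagonalAddPerm σ 1 p * diagonalAddPerm σ 1 (-p) =
      diagonal (fun i => 1 - p i * p (σ i)) := by
    rw [diagonalAddPerm_mul hσ, ← diagonalAddPerm_zero]
    congr 1 <;> ext i <;> simp [sub_eq_add_neg]
  have hdet : IsUnit ((diagonalAddPerm σ 1 p).det * (diagonalAddPerm σ 1 (-p)).det) := by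
    rw [← det_mul, hinv, det_diagonal]
    exact IsUnit.prod_univ_iff.mpr hp
  exact (isUnit_iff_isUnit_det _).mpr (isUnit_of_mul_isUnit_left hdet)

end Matrix

section Zoned

variable {α : Type*} {n : ℕ}

def zoned (l : ℕ) (x m y : α) (i : Fin n) : α :=
  if (i : ℕ) < l then x else if (i : ℕ) < n - l then m else y

lemma zoned_comp_rev {l : ℕ} (h : 2 * l ≤ n) (x m y : α) :
    zoned l x m y ∘ Fin.revPerm = (zoned l y m x : Fin n → α) := by
  ext i
  have := i.isLt
  simp only [Function.comp_apply, Fin.revPerm_apply, zoned, Fin.val_rev]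
  split_ifs <;> first | rfl | omega

lemma apply_zoned {β : Type*} (f : α → β) (l : ℕ) (x m y : α) (i : Fin n) :
    f (zoned l x m y i) = zoned l (f x) (f m) (f y) i := by
  unfold zoned; split_ifs <;> rfl

lemma zoned_add [Add α] (l : ℕ) (x m y x' m' y' : α) :
    zoned l x m y + zoned l x' m' y' = (zoned l (x + x') (m + m') (y + y') : Fin n → α) := by
  ext i; simp only [Pi.add_apply, zoned]; split_ifs <;> rfl

lemma zoned_mul [Mul α] (l : ℕ) (x m y x' m' y' : α) :
    zoned l x m y * zoned l x' m' y' = (zoned l (x * x') (m * m') (y * y') : Fin n → α) := by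
  ext i; simp only [Pi.mul_apply, zoned]; split_ifs <;> rfl

lemma prod_zoned [CommMonoid α] {l : ℕ} (h : 2 * l ≤ n) (x m y : α) :
    ∏ i, (zoned l x m y : Fin n → α) i = x ^ l * m ^ (n - 2 * l) * y ^ l := by
  set g : ℕ → α := fun k => if k < l then x else if k < n - l then m else y
  change ∏ i : Fin n, g i = _
  rw [Fin.prod_univ_eq_prod_range g, ← Finset.prod_range_mul_prod_Ico _ (show n - l ≤ n by omega),
    ← Finset.prod_range_mul_prod_Ico _ (show l ≤ n - l by omega)]
  have hx : ∀ k ∈ Finset.range l, g k = x := fun k hk => if_pos (Finset.mem_range.mp hk)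
  have hm : ∀ k ∈ Finset.Ico l (n - l), g k = m := fun k hk => by
    obtain ⟨h1, h2⟩ := Finset.mem_Ico.mp hk; simp [g, h2, not_lt.mpr h1]
  have hy : ∀ k ∈ Finset.Ico (n - l) n, g k = y := fun k hk => by
    obtain ⟨h1, -⟩ := Finset.mem_Ico.mp hk
    simp [g, show ¬k < l by omega, not_lt.mpr h1]
  rw [Finset.prod_congr rfl hx, Finset.prod_congr rfl hm, Finset.prod_congr rfl hy]
  simp only [Finset.prod_const, Finset.card_range, Nat.card_Ico]
  congr 3 <;> omega

end Zoned

section JSigma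

variable {R : Type*} [CommRing R] {n l : ℕ}

-- `c` plays the role of `q^σ` and `s` that of `q^{2σ}`; indices are `0, …, n-1`, so `k' = n-1-k`.
def jSigma (n l : ℕ) (c s : R) : Matrix (Fin n) (Fin n) R := fun i j =>
  if i = j then
    (if (i : ℕ) < l then 1 - s else if (i : ℕ) < n - l then 1 else 0)
  else if (i : ℕ) + (j : ℕ) = n - 1 ∧ ((i : ℕ) < l ∨ (j : ℕ) < l) then -c else 0

lemma jSigma_isSymm (c s : R) : (jSigma n l c s).IsSymm := by
  ext i j
  simp only [transpose_apply, jSigma, Fin.ext_iff]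
  split_ifs <;> first | rfl | omega

lemma jSigma_eq_diagonalAddPerm (h : 2 * l ≤ n) (c s : R) :
    jSigma n l c s = diagonalAddPerm Fin.revPerm (zoned l (1 - s) 1 0) (zoned l (-c) 0 (-c)) := by
  ext i j
  have := j.isLt
  simp only [jSigma, diagonalAddPerm_apply, zoned, Fin.revPerm_apply, Fin.ext_iff, Fin.val_rev]
  split_ifs <;> first | omega | simp

def jSigmaEigenvectors (n l : ℕ) (c : R) : Matrix (Fin n) (Fin n) R :=
  diagonalAddPerm Fin.revPerm 1 (zoned l c 0 (-c))

lemma jSigma_mul_jSigmaEigenvectors (h : 2 * l ≤ n) (c : R) :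
    jSigma n l c (c * c) * jSigmaEigenvectors n l c =
      jSigmaEigenvectors n l c * diagonal (zoned l 1 1 (-(c * c))) := by
  rw [jSigma_eq_diagonalAddPerm h, jSigmaEigenvectors, ← diagonalAddPerm_zero Fin.revPerm,
    diagonalAddPerm_mul Fin.rev_involutive, diagonalAddPerm_mul Fin.rev_involutive]
  simp only [zoned_comp_rev h, Pi.one_comp, Pi.zero_comp, mul_one, one_mul, mul_zero, add_zero,
    zero_add, zoned_mul, zoned_add]
  congr 1 <;> congr 1 <;> ring

lemma isUnit_jSigmaEigenvectors (h : 2 * l ≤ n) {c : R} (hc : IsUnit (1 + c * c)) :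
    IsUnit (jSigmaEigenvectors n l c) := by
  refine isUnit_diagonalAddPerm_one Fin.rev_involutive fun i => ?_
  rw [show zoned l c 0 (-c) (Fin.revPerm i) = zoned l (-c) 0 c i from
    congr_fun (zoned_comp_rev h c 0 (-c)) i]
  unfold zoned
  split_ifs <;> simp [hc]

lemma charpoly_jSigma (h : 2 * l ≤ n) {c : R} (hc : IsUnit (1 + c * c)) :
    (jSigma n l c (c * c)).charpoly = (X - 1) ^ (n - l) * (X + C (c * c)) ^ l := by
  rw [charpoly_eq_of_mul_eq_mul (isUnit_jSigmaEigenvectors h hc)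
    (jSigma_mul_jSigmaEigenvectors h c), charpoly_diagonal]
  have hX : (fun i => X - C (zoned l 1 1 (-(c * c)) i)) =
      (zoned l (X - 1) (X - 1) (X + C (c * c)) : Fin n → R[X]) := by
    ext1 i; rw [apply_zoned (fun r => X - C r)]; simp
  rw [hX, prod_zoned h, ← pow_add]
  congr 3; omega

end JSigma

theorem Jsigma_symmetric_and_eigenvalues_general (n l : ℕ)
    (hln : l ≤ n / 2) (q σ : ℝ) (hq0 : 0 < q) :
    let qs : ℝ := q ^ (2 * σ)
    let Jm : Matrix (Fin n) (Fin n) ℝ := fun i j =>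
      if i = j then
        (if (i : ℕ) < l then 1 - qs else if (i : ℕ) < n - l then 1 else 0)
      else if (i : ℕ) + (j : ℕ) = n - 1 ∧ ((i : ℕ) < l ∨ (j : ℕ) < l) then -(q ^ σ) else 0
    Jm.IsSymm ∧ (1 : ℝ) ≠ -qs ∧
      Jm.charpoly = (X - 1) ^ (n - l) * (X + C qs) ^ l := by
  intro qs Jm
  have hqs : qs = q ^ σ * q ^ σ := by rw [← Real.rpow_add hq0, ← two_mul]
  refine ⟨jSigma_isSymm (q ^ σ) qs, ?_, ?_⟩
  · have : 0 < qs := Real.rpow_pos_of_pos hq0 _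
    linarith
  · change (jSigma n l (q ^ σ) qs).charpoly = _
    rw [hqs]
    exact charpoly_jSigma (by omega) (IsUnit.mk0 _ (by positivity))

/-- `J^σ` is symmetric with exactly two eigenvalues: `1` with multiplicity `n-l`, and
`-q^{2σ}` with multiplicity `l` (expressed via the characteristic polynomial). -/
theorem Jsigma_symmetric_and_eigenvalues (n l : ℕ) (hn : 2 ≤ n) (hl : 1 ≤ l)
    (hln : l ≤ n / 2) (q σ : ℝ) (hq0 : 0 < q) (hq1 : q < 1) :
    let qs : ℝ := q ^ (2 * σ)
    let Jm : Matrix (Fin n) (Fin n) ℝ := fun i j =>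
      if i = j then
        (if (i : ℕ) < l then 1 - qs else if (i : ℕ) < n - l then 1 else 0)
      else if (i : ℕ) + (j : ℕ) = n - 1 ∧ ((i : ℕ) < l ∨ (j : ℕ) < l) then -(q ^ σ) else 0
    Jm.IsSymm ∧ (1 : ℝ) ≠ -qs ∧
      Jm.charpoly = (X - 1) ^ (n - l) * (X + C qs) ^ l :=
  Jsigma_symmetric_and_eigenvalues_general n l hln q σ hq0
end

section
/- Fix 0 < q < 1. For λ = (λ_1 ≥ ⋯ ≥ λ_l ≥ 0) ∈ ℤ^l, parameters t_0 t_1 t_2 t_3 ∈ [-q, 1), t = q^k, the eigenvalue E^K_λ := ∑_{j=1}^l ( q^{-1} t_0 t_1 t_2 t_3 t^{2l-j-1} (q^{λ_j} - 1) + t^{j-1}(q^{-λ_j} - 1) ) separates dominance-comparable weights: if λ, μ ∈ P_Σ^+ with λ < μ in the dominance order, then E^K_λ ≠ E^K_μ. -/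
/-!
Writing `t = q ^ k`, `p = t₀t₁t₂t₃` and `N = (l - 1) k`, the `i`-th summand of `E_λ` (indexed
from `0`) is, up to a term independent of `λ`, `ψ (λ_i - i k)` with
`ψ e = q ^ (-e) + p q ^ (2N - 1 + e)`.
For `-q ≤ p < 1` the forward differences of `ψ` are positive and strictly increasing on `[-N, ∞)`,
which contains every shifted weight `λ_i - i k`. Dominance `λ ≤ μ` is a partial-sum inequality for
the shifted weights, and the shifted weights of `λ` are decreasing, so a discrete Karamata
argument (supporting lines of `ψ` plus Abel summation) gives `E_λ < E_μ` whenever `λ ≠ μ`.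
-/

open Finset
open scoped fwdDiff

section DiscreteConvexity

variable {R : Type*} [Field R] [LinearOrder R] [IsStrictOrderedRing R] {f : ℤ → R} {a x y : ℤ}

theorem fwdDiff_mul_sub_le_sub (hf : MonotoneOn (Δ_[1] f) (Set.Ici a)) (hx : a ≤ x) (hy : a ≤ y) :
    Δ_[1] f x * (y - x) ≤ f y - f x := by
  rcases le_total x y with hxy | hyx
  · clear hy
    induction y, hxy using Int.leInduction with
    | base => simp
    | succ y hxy ih =>
      have hmono : Δ_[1] f x ≤ Δ_[1] f y := hf hx (le_trans hx hxy) hxy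
      have hstep : f (y + 1) = f y + Δ_[1] f y := by simp [fwdDiff]
      push_cast
      linarith
  · clear hx
    suffices f x - f y ≤ Δ_[1] f x * (x - y) by linarith
    induction x, hyx using Int.leInduction with
    | base => simp
    | succ x hyx ih =>
      have hmono : Δ_[1] f x ≤ Δ_[1] f (x + 1) :=
        hf (le_trans hy hyx) (Set.mem_Ici.2 (by omega)) (by omega)
      have hstep : f (x + 1) = f x + Δ_[1] f x := by simp [fwdDiff]
      have hxy : (0 : R) ≤ (x + 1 : ℤ) - y := by exact_mod_cast (by omega : (0 : ℤ) ≤ x + 1 - y)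
      calc f (x + 1) - f y ≤ Δ_[1] f x * ((x + 1 : ℤ) - y) := by push_cast at *; linarith
        _ ≤ Δ_[1] f (x + 1) * ((x + 1 : ℤ) - y) := mul_le_mul_of_nonneg_right hmono hxy

theorem fwdDiff_mul_sub_lt_sub (hf : StrictMonoOn (Δ_[1] f) (Set.Ici a)) (hy : a ≤ y)
    (hyx : y < x) : Δ_[1] f x * (y - x) < f y - f x := by
  have hsupport := fwdDiff_mul_sub_le_sub hf.monotoneOn (by omega : a ≤ x - 1) hy
  have hlt : Δ_[1] f (x - 1) < Δ_[1] f x :=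
    hf (Set.mem_Ici.2 (by omega)) (le_trans hy hyx.le) (by omega)
  have hstep : f x = f (x - 1) + Δ_[1] f (x - 1) := by simp [fwdDiff]
  have hneg : (y : R) - x < 0 := by exact_mod_cast (by omega : y - x < 0)
  have := mul_lt_mul_of_neg_right hlt hneg
  push_cast at hsupport
  linarith

end DiscreteConvexity

theorem Fin.sum_filter_val_lt_castSucc {M : Type*} [AddCommMonoid M] {n : ℕ} (d : Fin (n + 1) → M)
    {j : ℕ} (hj : j ≤ n) :
    ∑ i ∈ univ.filter (fun i : Fin n => (i : ℕ) < j), d i.castSucc =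
      ∑ i ∈ univ.filter (fun i : Fin (n + 1) => (i : ℕ) < j), d i := by
  rw [sum_filter, sum_filter, Fin.sum_univ_castSucc]
  simp [hj.not_gt]

theorem sum_mul_nonneg_of_antitone_of_partialSums_nonneg {R : Type*} [CommRing R] [LinearOrder R]
    [IsStrictOrderedRing R] {n : ℕ} {c d : Fin n → R} (hc : Antitone c) (hc0 : ∀ i, 0 ≤ c i)
    (hd : ∀ j ≤ n, 0 ≤ ∑ i ∈ univ.filter (fun i : Fin n => (i : ℕ) < j), d i) :
    0 ≤ ∑ i, c i * d i := by
  induction n with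
  | zero => simp
  | succ n ih =>
    have hrest : 0 ≤ ∑ i : Fin n, (c i.castSucc - c (Fin.last n)) * d i.castSucc := by
      refine ih (fun i j hij => sub_le_sub_right (hc (Fin.castSucc_le_castSucc_iff.2 hij)) _)
        (fun i => sub_nonneg.2 (hc (Fin.le_last _))) (fun j hj => ?_)
      rw [Fin.sum_filter_val_lt_castSucc d hj]
      exact hd j (by omega)
    have htotal : 0 ≤ ∑ i, d i := by simpa [Fin.is_le] using hd (n + 1) le_rfl
    rw [Fin.sum_univ_castSucc] at htotal ⊢
    have hlast := mul_nonneg (hc0 (Fin.last n)) htotal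
    simp only [sub_mul, sum_sub_distrib, ← mul_sum] at hrest
    linarith

theorem sum_comp_lt_sum_comp_of_partialSums_le {R : Type*} [Field R] [LinearOrder R]
    [IsStrictOrderedRing R] {f : ℤ → R} {a : ℤ} (hf : StrictMonoOn (Δ_[1] f) (Set.Ici a))
    (hfa : 0 < Δ_[1] f a) {n : ℕ} {x y : Fin n → ℤ} (hx : Antitone x) (hxa : ∀ i, a ≤ x i)
    (hya : ∀ i, a ≤ y i)
    (hxy : ∀ j ≤ n, ∑ i ∈ univ.filter (fun i : Fin n => (i : ℕ) < j), x i ≤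
      ∑ i ∈ univ.filter (fun i : Fin n => (i : ℕ) < j), y i)
    (hne : x ≠ y) :
    ∑ i, f (x i) < ∑ i, f (y i) := by
  have hc : ∀ i, 0 < Δ_[1] f (x i) := fun i =>
    hfa.trans_le (hf.monotoneOn Set.self_mem_Ici (hxa i) (hxa i))
  have hsupport : ∀ i, Δ_[1] f (x i) * (y i - x i) ≤ f (y i) - f (x i) := fun i =>
    fwdDiff_mul_sub_le_sub hf.monotoneOn (hxa i) (hya i)
  have habel : 0 ≤ ∑ i, Δ_[1] f (x i) * ((y i : R) - x i) := by
    refine sum_mul_nonneg_of_antitone_of_partialSums_nonneg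
      (fun i j hij => hf.monotoneOn (hxa j) (hxa i) (hx hij)) (fun i => (hc i).le) fun j hj => ?_
    rw [sum_sub_distrib, sub_nonneg]
    exact_mod_cast hxy j hj
  rw [← sub_pos, ← sum_sub_distrib]
  by_cases hdown : ∃ i, y i < x i
  · obtain ⟨i, hi⟩ := hdown
    exact habel.trans_lt (sum_lt_sum (fun i _ => hsupport i)
      ⟨i, mem_univ _, fwdDiff_mul_sub_lt_sub hf (hya i) hi⟩)
  · push Not at hdown
    obtain ⟨i, hi⟩ := Function.ne_iff.1 hne
    have hpos : 0 < ∑ i, Δ_[1] f (x i) * ((y i : R) - x i) :=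
      sum_pos' (fun j _ => mul_nonneg (hc j).le (sub_nonneg.2 (by exact_mod_cast hdown j)))
        ⟨i, mem_univ _, mul_pos (hc i) (sub_pos.2 (by exact_mod_cast lt_of_le_of_ne (hdown i) hi))⟩
    exact hpos.trans_le (sum_le_sum fun i _ => hsupport i)

namespace Koornwinder

noncomputable def eigenvalue (q p : ℝ) (k l : ℕ) (lam : Fin l → ℤ) : ℝ :=
  ∑ i : Fin l, (q⁻¹ * p * (q ^ k) ^ (2 * l - (i : ℕ) - 2) * (q ^ (lam i) - 1) +
    (q ^ k) ^ (i : ℕ) * (q ^ (-lam i) - 1))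

noncomputable def psi (q p : ℝ) (N e : ℤ) : ℝ := q ^ (-e) + p * q ^ (2 * N - 1 + e)

variable {q : ℝ}

theorem fwdDiff_psi (hq : q ≠ 0) (p : ℝ) (N m : ℤ) :
    Δ_[1] (psi q p N) m = (1 - q) * (q ^ (-m - 1) - p * q ^ (2 * N - 1 + m)) := by
  have e₁ : q ^ (-(m + 1)) = q ^ (-m - 1) := by ring_nf
  have e₂ : q ^ (-m) = q ^ (-m - 1) * q := by rw [← zpow_add_one₀ hq]; ring_nf
  have e₃ : q ^ (2 * N - 1 + (m + 1)) = q ^ (2 * N - 1 + m) * q := by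
    rw [← zpow_add_one₀ hq]; ring_nf
  simp only [fwdDiff, psi]
  rw [e₁, e₂, e₃]
  ring

theorem fwdDiff_psi_pos (hq0 : 0 < q) (hq1 : q < 1) {p : ℝ} (hp : p < 1) (N : ℤ) :
    0 < Δ_[1] (psi q p N) (-N) := by
  have h : Δ_[1] (psi q p N) (-N) = (1 - q) * (1 - p) * q ^ (N - 1) := by
    rw [fwdDiff_psi hq0.ne']; ring_nf
  rw [h]
  exact mul_pos (mul_pos (sub_pos.2 hq1) (sub_pos.2 hp)) (zpow_pos hq0 _)

theorem strictMonoOn_fwdDiff_psi (hq0 : 0 < q) (hq1 : q < 1) {p : ℝ} (hp : -q ≤ p) (N : ℤ) :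
    StrictMonoOn (Δ_[1] (psi q p N)) (Set.Ici (-N)) := by
  intro m₁ hm₁ m₂ _ hlt
  rw [Set.mem_Ici] at hm₁
  have hq : q ≠ 0 := hq0.ne'
  have hfactor : Δ_[1] (psi q p N) m₂ - Δ_[1] (psi q p N) m₁ =
      (1 - q) * (1 - q ^ (m₂ - m₁)) * (q ^ (-m₂ - 1) + p * q ^ (2 * N - 1 + m₁)) := by
    have e₁ : q ^ (m₂ - m₁) * q ^ (-m₂ - 1) = q ^ (-m₁ - 1) := by rw [← zpow_add₀ hq]; ring_nf
    have e₂ : q ^ (m₂ - m₁) * q ^ (2 * N - 1 + m₁) = q ^ (2 * N - 1 + m₂) := by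
      rw [← zpow_add₀ hq]; ring_nf
    rw [fwdDiff_psi hq, fwdDiff_psi hq]
    linear_combination (1 - q) * e₁ + (1 - q) * p * e₂
  -- `p ≥ -q` bounds the possibly negative second summand by `-q ^ (2N + m₁)`, which is beaten
  -- by the first summand because `-m₂ - 1 < N ≤ 2N + m₁`.
  have hsecond : -q ^ (2 * N + m₁) ≤ p * q ^ (2 * N - 1 + m₁) := by
    have hshift : q ^ (2 * N + m₁) = q ^ (2 * N - 1 + m₁) * q := by
      rw [← zpow_add_one₀ hq]; ring_nf
    have := mul_le_mul_of_nonneg_right hp (zpow_pos hq0 (2 * N - 1 + m₁)).le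
    rw [hshift]
    linarith
  have hfirst : q ^ (2 * N + m₁) < q ^ (-m₂ - 1) :=
    zpow_lt_zpow_right_of_lt_one₀ hq0 hq1 (by omega)
  have hpos : 0 < (1 - q) * (1 - q ^ (m₂ - m₁)) * (q ^ (-m₂ - 1) + p * q ^ (2 * N - 1 + m₁)) :=
    mul_pos (mul_pos (sub_pos.2 hq1) (sub_pos.2 (zpow_lt_one₀ hq0 hq1 (by omega))))
      (by linarith)
  linarith

theorem eigenvalue_summand_eq (hq : q ≠ 0) (p : ℝ) (k : ℕ) {l : ℕ} (i : Fin l) (ν : ℤ) :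
    q⁻¹ * p * (q ^ k) ^ (2 * l - (i : ℕ) - 2) * (q ^ ν - 1) + (q ^ k) ^ (i : ℕ) * (q ^ (-ν) - 1) =
      psi q p ((l - 1) * k) (ν - i * k) -
        ((q ^ k) ^ (i : ℕ) + q⁻¹ * p * (q ^ k) ^ (2 * l - (i : ℕ) - 2)) := by
  have hexp : ((2 * l - (i : ℕ) - 2 : ℕ) : ℤ) = 2 * l - i - 2 := by omega
  have e₁ : (q ^ k) ^ (i : ℕ) * q ^ (-ν) = q ^ (-(ν - i * k)) := by
    rw [← pow_mul, ← zpow_natCast, ← zpow_add₀ hq]; push_cast; ring_nf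
  have e₂ : q⁻¹ * (q ^ k) ^ (2 * l - (i : ℕ) - 2) * q ^ ν =
      q ^ (2 * ((l - 1) * k) - 1 + (ν - i * k)) := by
    rw [← pow_mul, ← zpow_natCast, ← zpow_neg_one, ← zpow_add₀ hq, ← zpow_add₀ hq]
    push_cast [hexp]; ring_nf
  rw [psi]
  linear_combination e₁ + p * e₂

theorem eigenvalue_sub_eigenvalue (hq : q ≠ 0) (p : ℝ) (k : ℕ) {l : ℕ} (lam mu : Fin l → ℤ) :
    eigenvalue q p k l mu - eigenvalue q p k l lam =
      ∑ i, (psi q p ((l - 1) * k) (mu i - i * k) - psi q p ((l - 1) * k) (lam i - i * k)) := by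
  rw [eigenvalue, eigenvalue, ← sum_sub_distrib]
  refine sum_congr rfl fun i _ => ?_
  rw [eigenvalue_summand_eq hq, eigenvalue_summand_eq hq]
  ring

end Koornwinder

theorem koornwinder_eigenvalue_separation_general (q : ℝ) (hq0 : 0 < q) (hq1 : q < 1)
    (l k : ℕ) (p : ℝ) (hp : p ∈ Set.Ico (-q) 1)
    (lam mu : Fin l → ℤ)
    (hlam : (∀ i j : Fin l, i ≤ j → lam j ≤ lam i) ∧ ∀ i, 0 ≤ lam i)
    (hmu : (∀ i j : Fin l, i ≤ j → mu j ≤ mu i) ∧ ∀ i, 0 ≤ mu i)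
    (hlt : (∀ j : ℕ, 1 ≤ j → j ≤ l →
        ∑ i ∈ Finset.univ.filter (fun i : Fin l => (i : ℕ) < j), lam i ≤
        ∑ i ∈ Finset.univ.filter (fun i : Fin l => (i : ℕ) < j), mu i) ∧ lam ≠ mu) :
    (∑ i : Fin l,
        (q⁻¹ * p * (q ^ k) ^ (2 * l - (i : ℕ) - 2) * (q ^ (lam i) - 1) +
          (q ^ k) ^ ((i : ℕ)) * (q ^ (-lam i) - 1))) ≠
    (∑ i : Fin l,
        (q⁻¹ * p * (q ^ k) ^ (2 * l - (i : ℕ) - 2) * (q ^ (mu i) - 1) +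
          (q ^ k) ^ ((i : ℕ)) * (q ^ (-mu i) - 1))) := by
  obtain ⟨hdom, hne⟩ := hlt
  set x : Fin l → ℤ := fun i => lam i - i * k
  set y : Fin l → ℤ := fun i => mu i - i * k
  have hshifted_ge : ∀ ν : Fin l → ℤ, (∀ i, 0 ≤ ν i) → ∀ i, -(((l : ℤ) - 1) * k) ≤ ν i - i * k :=
    fun ν hν i => by
      have : (i : ℤ) * k ≤ ((l : ℤ) - 1) * k :=
        mul_le_mul_of_nonneg_right (by omega) (Nat.cast_nonneg k)
      linarith [hν i]
  have hx : Antitone x := fun i j hij => by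
    have : (i : ℤ) * k ≤ (j : ℤ) * k :=
      mul_le_mul_of_nonneg_right (by exact_mod_cast hij) (Nat.cast_nonneg k)
    linarith [hlam.1 i j hij]
  have hxy : ∀ j ≤ l, ∑ i ∈ univ.filter (fun i : Fin l => (i : ℕ) < j), x i ≤
      ∑ i ∈ univ.filter (fun i : Fin l => (i : ℕ) < j), y i := by
    intro j hj
    rcases Nat.eq_zero_or_pos j with rfl | hj0
    · simp
    · simp only [x, y, sum_sub_distrib]
      linarith [hdom j hj0 hj]
  have hxy_ne : x ≠ y := fun h => hne (funext fun i => by simpa [x, y] using congrFun h i)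
  show Koornwinder.eigenvalue q p k l lam ≠ Koornwinder.eigenvalue q p k l mu
  refine (sub_pos.1 ?_).ne
  rw [Koornwinder.eigenvalue_sub_eigenvalue hq0.ne', sum_sub_distrib, sub_pos]
  exact sum_comp_lt_sum_comp_of_partialSums_le
    (Koornwinder.strictMonoOn_fwdDiff_psi hq0 hq1 hp.1 _)
    (Koornwinder.fwdDiff_psi_pos hq0 hq1 hp.2 _) hx (hshifted_ge lam hlam.2) (hshifted_ge mu hmu.2) hxy hxy_ne

/-- The Koornwinder eigenvalues
`E^K_λ = ∑_{j=1}^l ( q⁻¹ t₀t₁t₂t₃ t^{2l-j-1}(q^{λ_j} - 1) + t^{j-1}(q^{-λ_j} - 1) )`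
with `t = q^k` and `t₀t₁t₂t₃ = p ∈ [-q, 1)` separate dominance-comparable dominant
weights: if `λ < μ` in the dominance order then `E^K_λ ≠ E^K_μ`. -/
theorem koornwinder_eigenvalue_separation (q : ℝ) (hq0 : 0 < q) (hq1 : q < 1)
    (l k : ℕ) (hl : 1 ≤ l) (hk : 1 ≤ k) (p : ℝ) (hp : p ∈ Set.Ico (-q) 1)
    (lam mu : Fin l → ℤ)
    (hlam : (∀ i j : Fin l, i ≤ j → lam j ≤ lam i) ∧ ∀ i, 0 ≤ lam i)
    (hmu : (∀ i j : Fin l, i ≤ j → mu j ≤ mu i) ∧ ∀ i, 0 ≤ mu i)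
    (hlt : (∀ j : ℕ, 1 ≤ j → j ≤ l →
        ∑ i ∈ Finset.univ.filter (fun i : Fin l => (i : ℕ) < j), lam i ≤
        ∑ i ∈ Finset.univ.filter (fun i : Fin l => (i : ℕ) < j), mu i) ∧ lam ≠ mu) :
    (∑ i : Fin l,
        (q⁻¹ * p * (q ^ k) ^ (2 * l - (i : ℕ) - 2) * (q ^ (lam i) - 1) +
          (q ^ k) ^ ((i : ℕ)) * (q ^ (-lam i) - 1))) ≠
    (∑ i : Fin l,
        (q⁻¹ * p * (q ^ k) ^ (2 * l - (i : ℕ) - 2) * (q ^ (mu i) - 1) +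
          (q ^ k) ^ ((i : ℕ)) * (q ^ (-mu i) - 1))) :=
  koornwinder_eigenvalue_separation_general q hq0 hq1 l k p hp lam mu hlam hmu hlt
end
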